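/- (Theorem 3.4) Let ω ∈ (0,1) and let K be an n×n complex matrix that is diagonalizable with purely imaginary spectrum, i.e. K = QΓQ⁻¹ for some invertible complex matrix Q and complex diagonal matrix Γ all of whose diagonal entries have zero real part. Set A := I_{mn} − (Iinv·D) ⊗ K and P(ω) := I_{mn} − (S(ω)·D) ⊗ K, where ⊗ is the Kronecker product, and assume A and P(ω) are invertible. Then the polynomial (X − 1)^{n(m−1)} divides the characteristic polynomial of P(ω)⁻¹A (so at most n eigenvalues differ from 1), and every complex eigenvalue λ of P(ω)⁻¹A lies in the annulus ω/(2−ω) ≤ |λ − 2/(2−ω)| ≤ ω/((2−ω)(1−ω)). -/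

import Mathlib

/-!
Since `Iinv + Iinvᵀ = e eᵀ`, the matrix `A = P(ω) - (ω/2) (e eᵀ D) ⊗ K` is a perturbation of
`P(ω)` of rank at most `n`, so `P(ω)⁻¹ A = 1 + U V` with `V` having `n` rows, and comparing the
characteristic polynomials of `U V` and `V U` yields the factor `(X - 1)^(n(m-1))`.

For the eigenvalues, conjugation by `I ⊗ Q` replaces `K` by `diag Γ` and splits `A ξ = λ P(ω) ξ`
into blocks `(I - γ Iinv D) x = λ (I - γ S(ω) D) x` with `γ` purely imaginary. Pairing a block
with `y = D x` gives `w = λ q`, where `w = x* D x - γ y* Iinv y` and `q = w + γ (ω/2) |eᵀ y|²`.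
As `Re (y* Iinv y) = |eᵀ y|² / 2`, the number `q` is `w` with its imaginary part scaled by `1 - ω`.
Hence `λ - 2/(2-ω) = -ω w̄ / ((2-ω) q)`, and `(1-ω)|w| ≤ |q| ≤ |w|` gives the annulus.
-/

open Matrix

/-- The sinc integrand `sin(πt)/(πt)`, extended by the value 1 at `t = 0`. -/
noncomputable def sincFn (t : ℝ) : ℝ :=
  if t = 0 then 1 else Real.sin (Real.pi * t) / (Real.pi * t)

/-- The `m × m` Toeplitz matrix `Iinv(k,l) = 1/2 + ∫₀^{k-l} sin(πt)/(πt) dt`. -/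
noncomputable def IinvMat (m : ℕ) : Matrix (Fin m) (Fin m) ℝ :=
  fun k l => 1 / 2 + ∫ t in (0 : ℝ)..((k : ℝ) - (l : ℝ)), sincFn t

/-- The skew-symmetric part `S = (Iinv - Iinvᵀ)/2`. -/
noncomputable def Smat (m : ℕ) : Matrix (Fin m) (Fin m) ℝ :=
  (2 : ℝ)⁻¹ • (IinvMat m - (IinvMat m)ᵀ)

/-- The all-ones vector `e ∈ ℝ^m`. -/
def eVec (m : ℕ) : Fin m → ℝ := fun _ => 1

open Polynomial Kronecker

section AllAtOnce

variable {ι κ R : Type*} [Fintype ι] [DecidableEq ι] [Fintype κ] [DecidableEq κ] [CommRing R]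

/-- The theorem's `A` is `allAtOnce Iinv D K` and its `P(ω)` is `allAtOnce S(ω) D K`. -/
def allAtOnce (M D : Matrix ι ι R) (K : Matrix κ κ R) : Matrix (ι × κ) (ι × κ) R :=
  1 - (M * D) ⊗ₖ K

theorem X_sub_one_pow_dvd_charpoly_one_add_mul (U : Matrix ι κ R) (V : Matrix κ ι R) :
    (X - 1) ^ (Fintype.card ι - Fintype.card κ) ∣ (1 + U * V).charpoly := by
  have hdvd : X ^ (Fintype.card ι - Fintype.card κ) ∣ (U * V).charpoly := by
    rcases le_or_gt (Fintype.card κ) (Fintype.card ι) with h | h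
    · rw [charpoly_mul_comm_of_le U V h]
      exact dvd_mul_right _ _
    · rw [Nat.sub_eq_zero_of_le h.le, pow_zero]
      exact one_dvd _
  rw [← C_1, X_sub_C_pow_dvd_iff, ← charpoly_sub_scalar]
  simpa using hdvd

theorem X_sub_one_pow_dvd_charpoly_inv_mul_add_mul {P : Matrix ι ι R} (hP : IsUnit P)
    (U : Matrix ι κ R) (V : Matrix κ ι R) :
    (X - 1) ^ (Fintype.card ι - Fintype.card κ) ∣ (P⁻¹ * (P + U * V)).charpoly := by
  rw [mul_add, nonsing_inv_mul P ((isUnit_iff_isUnit_det P).mp hP), ← Matrix.mul_assoc]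
  exact X_sub_one_pow_dvd_charpoly_one_add_mul _ _

theorem X_sub_one_pow_dvd_charpoly_allAtOnce (C D : Matrix ι ι R) (K : Matrix κ κ R) (a : R)
    (hP : IsUnit (allAtOnce (C - a • vecMulVec 1 1) D K)) :
    (X - 1) ^ (Fintype.card κ * (Fintype.card ι - 1)) ∣
      ((allAtOnce (C - a • vecMulVec 1 1) D K)⁻¹ * allAtOnce C D K).charpoly := by
  have hfactor : (vecMulVec 1 1 * D) ⊗ₖ K =
      (replicateCol Unit (1 : ι → R) ⊗ₖ (1 : Matrix κ κ R)) *
        (replicateRow Unit (1 ᵥ* D) ⊗ₖ K) := by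
    rw [← mul_kronecker_mul, one_mul, replicateRow_vecMul, ← Matrix.mul_assoc, ← vecMulVec_eq]
  have hsplit : allAtOnce C D K = allAtOnce (C - a • vecMulVec 1 1) D K +
      (-a • (replicateCol Unit (1 : ι → R) ⊗ₖ (1 : Matrix κ κ R))) *
        (replicateRow Unit (1 ᵥ* D) ⊗ₖ K) := by
    rw [allAtOnce, allAtOnce, show C * D = (C - a • vecMulVec 1 1) * D + a • (vecMulVec 1 1 * D) by
      rw [sub_mul, smul_mul, sub_add_cancel], add_kronecker, smul_kronecker, hfactor, smul_mul,
      neg_smul]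
    abel
  have hcard : Fintype.card κ * (Fintype.card ι - 1) =
      Fintype.card (ι × κ) - Fintype.card (Unit × κ) := by
    rw [Fintype.card_prod, Fintype.card_prod, Fintype.card_unit, one_mul, Nat.mul_sub_one,
      mul_comm]
  rw [hsplit, hcard]
  exact X_sub_one_pow_dvd_charpoly_inv_mul_add_mul hP _ _

theorem one_kronecker_mul_allAtOnce {T K G : Matrix κ κ R} (M D : Matrix ι ι R)
    (h : T * K = G * T) :
    (1 ⊗ₖ T) * allAtOnce M D K = allAtOnce M D G * (1 ⊗ₖ T) := by
  rw [allAtOnce, allAtOnce, Matrix.mul_sub, Matrix.sub_mul, Matrix.mul_one, Matrix.one_mul,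
    ← mul_kronecker_mul, ← mul_kronecker_mul, Matrix.one_mul, Matrix.mul_one, h]

theorem allAtOnce_diagonal_mulVec_apply (M D : Matrix ι ι R) (Γ : κ → R) (η : ι × κ → R)
    (k : ι) (j : κ) :
    (allAtOnce M D (diagonal Γ) *ᵥ η) (k, j) = ((1 - Γ j • (M * D)) *ᵥ fun l => η (l, j)) k := by
  have hkron : (((M * D) ⊗ₖ diagonal Γ) *ᵥ η) (k, j) = Γ j * ((M * D) *ᵥ fun l => η (l, j)) k := by
    simp only [mulVec, dotProduct, Fintype.sum_prod_type, kroneckerMap_apply, diagonal_apply,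
      mul_ite, mul_zero, ite_mul, zero_mul, Finset.sum_ite_eq, Finset.mem_univ, if_true,
      Finset.mul_sum]
    exact Finset.sum_congr rfl fun l _ => by ring
  rw [allAtOnce, sub_mulVec, sub_mulVec, one_mulVec, one_mulVec, Pi.sub_apply, Pi.sub_apply, hkron,
    smul_mulVec, Pi.smul_apply, smul_eq_mul]

end AllAtOnce

def spectralAnnulus (ω : ℝ) : Set ℂ :=
  {lam | ω / (2 - ω) ≤ ‖lam - 2 / (2 - (ω : ℂ))‖ ∧
    ‖lam - 2 / (2 - (ω : ℂ))‖ ≤ ω / ((2 - ω) * (1 - ω))}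

section Annulus

variable {ω : ℝ}

theorem mem_spectralAnnulus_of_eq_mul (hω : ω ∈ Set.Ioo 0 1) {w q lam : ℂ} (hw : w ≠ 0)
    (hre : q.re = w.re) (him : q.im = (1 - ω) * w.im) (h : w = lam * q) :
    lam ∈ spectralAnnulus ω := by
  obtain ⟨hω0, hω1⟩ := hω
  have h2ω : (0 : ℝ) < 2 - ω := by linarith
  have h1ω : (0 : ℝ) < 1 - ω := by linarith
  have hsq : ‖q‖ ^ 2 = w.re ^ 2 + (1 - ω) ^ 2 * w.im ^ 2 := by
    rw [Complex.sq_norm, Complex.normSq_apply, hre, him]; ring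
  have hwsq : ‖w‖ ^ 2 = w.re ^ 2 + w.im ^ 2 := by
    rw [Complex.sq_norm, Complex.normSq_apply]; ring
  have hw0 : 0 < ‖w‖ := norm_pos_iff.mpr hw
  have hqw : ‖q‖ ≤ ‖w‖ := by
    refine (pow_le_pow_iff_left₀ (norm_nonneg _) (norm_nonneg _) two_ne_zero).mp ?_
    rw [hsq, hwsq]
    nlinarith [sq_nonneg w.im, mul_pos hω0 h2ω]
  have hwq : (1 - ω) * ‖w‖ ≤ ‖q‖ := by
    refine (pow_le_pow_iff_left₀ (by positivity) (norm_nonneg _) two_ne_zero).mp ?_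
    rw [hsq, mul_pow, hwsq]
    nlinarith [sq_nonneg w.re, mul_pos hω0 h2ω]
  have hq0 : 0 < ‖q‖ := lt_of_lt_of_le (by positivity) hwq
  have hkey : lam - 2 / (2 - ω) = -ω * (starRingEnd ℂ) w / ((2 - ω) * q) := by
    have h2ω' : (2 : ℂ) - ω ≠ 0 := by exact_mod_cast h2ω.ne'
    have hconj : (2 - ω) * w - 2 * q = -ω * (starRingEnd ℂ) w := by
      apply Complex.ext <;> simp [hre, him] <;> ring
    rw [eq_div_iff (mul_ne_zero h2ω' (norm_pos_iff.mp hq0)), ← hconj, h]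
    field_simp
  have hnorm : ‖lam - 2 / (2 - ω)‖ = ω * ‖w‖ / ((2 - ω) * ‖q‖) := by
    rw [hkey, norm_div, norm_mul, norm_mul, norm_neg, Complex.norm_conj, Complex.norm_real,
      Real.norm_eq_abs, abs_of_pos hω0, show (2 : ℂ) - ω = ((2 - ω : ℝ) : ℂ) by push_cast; rfl,
      Complex.norm_real, Real.norm_eq_abs, abs_of_pos h2ω]
  refine ⟨?_, ?_⟩ <;> rw [hnorm, div_le_div_iff₀ (by positivity) (by positivity)]
  · nlinarith [mul_le_mul_of_nonneg_left hqw (mul_pos hω0 h2ω).le]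
  · nlinarith [mul_le_mul_of_nonneg_left hwq (mul_pos hω0 h2ω).le]

theorem one_mem_spectralAnnulus (hω : ω ∈ Set.Ioo 0 1) : 1 ∈ spectralAnnulus ω :=
  mem_spectralAnnulus_of_eq_mul hω one_ne_zero rfl (by simp) (mul_one 1).symm

theorem re_star_dotProduct_mulVec_of_add_conjTranspose {ι : Type*} [Fintype ι] {C : Matrix ι ι ℂ}
    (hC : C + Cᴴ = vecMulVec 1 1) (y : ι → ℂ) :
    (star y ⬝ᵥ C *ᵥ y).re = Complex.normSq (1 ⬝ᵥ y) / 2 := by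
  have hstar : star (star y ⬝ᵥ C *ᵥ y) = star y ⬝ᵥ Cᴴ *ᵥ y := by
    rw [star_dotProduct, star_star, star_mulVec, dotProduct_mulVec, dotProduct_comm]
  have hsum : star y ⬝ᵥ C *ᵥ y + star (star y ⬝ᵥ C *ᵥ y) = Complex.normSq (1 ⬝ᵥ y) := by
    rw [hstar, ← dotProduct_add, ← add_mulVec, hC, vecMulVec_mulVec,
      Complex.normSq_eq_conj_mul_self, dotProduct_smul, MulOpposite.smul_eq_mul_unop, MulOpposite.unop_op, star_dotProduct,
      star_one, Complex.star_def]
  rw [Complex.star_def, Complex.add_conj] at hsum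
  have hre : 2 * (star y ⬝ᵥ C *ᵥ y).re = Complex.normSq (1 ⬝ᵥ y) := by exact_mod_cast hsum
  linarith

theorem mem_spectralAnnulus_of_block_eigen {ι : Type*} [Fintype ι] [DecidableEq ι]
    {C D : Matrix ι ι ℂ} (hC : C + Cᴴ = vecMulVec 1 1) (hD : D.IsHermitian)
    (hω : ω ∈ Set.Ioo 0 1) {γ lam : ℂ} (hγ : γ.re = 0) {x : ι → ℂ}
    (hPx : (1 - γ • ((C - (ω / 2 : ℂ) • vecMulVec 1 1) * D)) *ᵥ x ≠ 0)
    (h : (1 - γ • (C * D)) *ᵥ x = lam • (1 - γ • ((C - (ω / 2 : ℂ) • vecMulVec 1 1) * D)) *ᵥ x) :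
    lam ∈ spectralAnnulus ω := by
  set y := D *ᵥ x
  set c := 1 ⬝ᵥ y
  set u := (1 - γ • (C * D)) *ᵥ x
  have hu : u = x - γ • C *ᵥ y := by
    simp only [u, y, sub_mulVec, one_mulVec, smul_mulVec, mulVec_mulVec]
  have hPu : (1 - γ • ((C - (ω / 2 : ℂ) • vecMulVec 1 1) * D)) *ᵥ x =
      u + ((ω / 2 : ℂ) * (γ * c)) • 1 := by
    simp only [u, c, y, sub_mulVec, one_mulVec, smul_mulVec, ← mulVec_mulVec, sub_mul, smul_mul,
      vecMulVec_mulVec, op_smul_eq_smul, smul_sub, smul_smul]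
    module
  rw [hPu] at hPx h
  by_cases hγc : γ * c = 0
  · -- both block operators agree on `x`
    rw [hγc, mul_zero, zero_smul, add_zero] at h hPx
    have hlam : lam = 1 := smul_left_injective ℂ hPx (h.symm.trans (one_smul ℂ u).symm)
    exact hlam ▸ one_mem_spectralAnnulus hω
  have hN : (star y ⬝ᵥ x).im = 0 := by
    rw [star_dotProduct, Complex.star_def, Complex.conj_im, neg_eq_zero]
    exact hD.im_star_dotProduct_mulVec_self x
  have hz : (star y ⬝ᵥ C *ᵥ y).re = Complex.normSq c / 2 :=
    re_star_dotProduct_mulVec_of_add_conjTranspose hC y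
  have hw : star y ⬝ᵥ u = star y ⬝ᵥ x - γ * (star y ⬝ᵥ C *ᵥ y) := by
    rw [hu, dotProduct_sub, dotProduct_smul, smul_eq_mul]
  have hq : star y ⬝ᵥ (u + ((ω / 2 : ℂ) * (γ * c)) • 1) =
      star y ⬝ᵥ u + (ω / 2 : ℂ) * γ * Complex.normSq c := by
    rw [dotProduct_add, dotProduct_smul, star_dotProduct y (1 : ι → ℂ), star_one, smul_eq_mul,
      Complex.star_def, ← Complex.mul_conj]
    ring
  have hwim : (star y ⬝ᵥ u).im = -γ.im * (Complex.normSq c / 2) := by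
    simp [hw, hN, hz, hγ]
  have hγim : γ.im ≠ 0 := fun h0 => left_ne_zero_of_mul hγc (Complex.ext hγ h0)
  have hc : Complex.normSq c ≠ 0 := Complex.normSq_eq_zero.not.mpr (right_ne_zero_of_mul hγc)
  refine mem_spectralAnnulus_of_eq_mul hω (w := star y ⬝ᵥ u)
    (q := star y ⬝ᵥ (u + ((ω / 2 : ℂ) * (γ * c)) • 1)) ?_ ?_ ?_ ?_
  · intro hw0
    apply_fun Complex.im at hw0
    simp [hwim, hγim, hc] at hw0
  · simp [hq, hγ]
  · simp only [hq, Complex.add_im, hwim, Complex.mul_im, Complex.mul_re, Complex.div_ofNat_re,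
      Complex.ofReal_re, hγ, Complex.div_ofNat_im, Complex.ofReal_im, zero_div, zero_mul, mul_zero,
      sub_self, add_zero, zero_add]
    ring
  · conv_lhs => rw [h]
    rw [dotProduct_smul, smul_eq_mul]

theorem mem_spectralAnnulus_of_eigen {ι κ : Type*} [Fintype ι] [DecidableEq ι] [Fintype κ]
    [DecidableEq κ] {C D : Matrix ι ι ℂ} (hC : C + Cᴴ = vecMulVec 1 1) (hD : D.IsHermitian)
    (hω : ω ∈ Set.Ioo 0 1) {Q : Matrix κ κ ℂ} (hQ : IsUnit Q) {Γ : κ → ℂ}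
    (hΓ : ∀ j, (Γ j).re = 0)
    (hP : IsUnit (allAtOnce (C - (ω / 2 : ℂ) • vecMulVec 1 1) D (Q * diagonal Γ * Q⁻¹)))
    {lam : ℂ} {ξ : ι × κ → ℂ} (hξ : ξ ≠ 0)
    (h : ((allAtOnce (C - (ω / 2 : ℂ) • vecMulVec 1 1) D (Q * diagonal Γ * Q⁻¹))⁻¹ *
      allAtOnce C D (Q * diagonal Γ * Q⁻¹)) *ᵥ ξ = lam • ξ) :
    lam ∈ spectralAnnulus ω := by
  set K := Q * diagonal Γ * Q⁻¹
  set Cω := C - (ω / 2 : ℂ) • vecMulVec 1 1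
  have hPξ : allAtOnce Cω D K *ᵥ ξ ≠ 0 := fun h0 =>
    hξ (mulVec_injective_iff_isUnit.mpr hP (h0.trans (mulVec_zero _).symm))
  have hAξ : allAtOnce C D K *ᵥ ξ = lam • allAtOnce Cω D K *ᵥ ξ := by
    rw [← mulVec_smul, ← h, mulVec_mulVec, ← Matrix.mul_assoc,
      mul_nonsing_inv _ ((isUnit_iff_isUnit_det _).mp hP), Matrix.one_mul]
  have hconj : ∀ M : Matrix ι ι ℂ,
      ((1 : Matrix ι ι ℂ) ⊗ₖ Q⁻¹) * allAtOnce M D K = allAtOnce M D (diagonal Γ) * (1 ⊗ₖ Q⁻¹) :=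
    fun M => one_kronecker_mul_allAtOnce M D (by
      rw [← Matrix.mul_assoc, ← Matrix.mul_assoc,
        nonsing_inv_mul Q ((isUnit_iff_isUnit_det Q).mp hQ), Matrix.one_mul])
  set η := ((1 : Matrix ι ι ℂ) ⊗ₖ Q⁻¹) *ᵥ ξ
  have hPη : allAtOnce Cω D (diagonal Γ) *ᵥ η ≠ 0 := by
    rw [mulVec_mulVec, ← hconj, ← mulVec_mulVec]
    intro h0
    apply hPξ
    have hleft : ((1 : Matrix ι ι ℂ) ⊗ₖ Q) * (1 ⊗ₖ Q⁻¹) = (1 : Matrix (ι × κ) (ι × κ) ℂ) := by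
      rw [← mul_kronecker_mul, Matrix.one_mul, mul_nonsing_inv Q ((isUnit_iff_isUnit_det Q).mp hQ),
        one_kronecker_one]
    have := congrArg (((1 : Matrix ι ι ℂ) ⊗ₖ Q) *ᵥ ·) h0
    rwa [mulVec_mulVec, hleft, one_mulVec, mulVec_zero] at this
  have hAη : allAtOnce C D (diagonal Γ) *ᵥ η = lam • allAtOnce Cω D (diagonal Γ) *ᵥ η := by
    rw [mulVec_mulVec, mulVec_mulVec, ← hconj, ← hconj, ← mulVec_mulVec, ← mulVec_mulVec, hAξ,
      mulVec_smul]
  obtain ⟨⟨k, j⟩, hkj⟩ := Function.ne_iff.mp hPη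
  refine mem_spectralAnnulus_of_block_eigen hC hD hω (hΓ j) (x := fun l => η (l, j)) ?_ ?_
  · intro h0
    apply hkj
    rw [allAtOnce_diagonal_mulVec_apply, h0]
    rfl
  · funext k'
    have := congrFun hAη (k', j)
    rwa [Pi.smul_apply, allAtOnce_diagonal_mulVec_apply, allAtOnce_diagonal_mulVec_apply] at this

end Annulus

theorem sincFn_neg (t : ℝ) : sincFn (-t) = sincFn t := by
  unfold sincFn
  rcases eq_or_ne t 0 with rfl | ht
  · simp
  · rw [if_neg (neg_ne_zero.mpr ht), if_neg ht, mul_neg, Real.sin_neg, neg_div_neg_eq]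

theorem IinvMat_add_transpose (m : ℕ) : IinvMat m + (IinvMat m)ᵀ = vecMulVec (eVec m) (eVec m) := by
  ext k l
  have hodd : ∫ t in (0 : ℝ)..((l : ℝ) - k), sincFn t =
      -∫ t in (0 : ℝ)..((k : ℝ) - l), sincFn t := by
    rw [← neg_sub, ← intervalIntegral.integral_symm, ← neg_zero,
      ← intervalIntegral.integral_comp_neg, neg_zero]
    simp only [sincFn_neg]
  rw [Matrix.add_apply, transpose_apply, vecMulVec_apply, IinvMat, IinvMat]
  simp only [hodd, eVec]
  ring

theorem vecMulVec_eVec_map_ofReal (m : ℕ) :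
    (vecMulVec (eVec m) (eVec m)).map Complex.ofReal = vecMulVec 1 1 := by
  ext k l
  simp [vecMulVec_apply, eVec]

open Polynomial Kronecker in
theorem stmt13_general (m n : ℕ) (d : Fin m → ℝ)
    (ω : ℝ) (hω : ω ∈ Set.Ioo (0 : ℝ) 1)
    (K Q : Matrix (Fin n) (Fin n) ℂ) (Γ : Fin n → ℂ) (hQ : IsUnit Q)
    (hΓ : ∀ j, (Γ j).re = 0) (hK : K = Q * Matrix.diagonal Γ * Q⁻¹) :
    let Dc : Matrix (Fin m) (Fin m) ℂ := (Matrix.diagonal d).map Complex.ofReal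
    let Sω : Matrix (Fin m) (Fin m) ℂ :=
      (IinvMat m - (ω / 2) • Matrix.vecMulVec (eVec m) (eVec m)).map Complex.ofReal
    let A : Matrix (Fin m × Fin n) (Fin m × Fin n) ℂ :=
      1 - ((IinvMat m).map Complex.ofReal * Dc) ⊗ₖ K
    let P : Matrix (Fin m × Fin n) (Fin m × Fin n) ℂ := 1 - (Sω * Dc) ⊗ₖ K
    IsUnit A → IsUnit P →
      ((X - 1) ^ (n * (m - 1)) ∣ (P⁻¹ * A).charpoly) ∧
      ∀ (lam : ℂ) (ξ : Fin m × Fin n → ℂ), ξ ≠ 0 →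
        (P⁻¹ * A).mulVec ξ = lam • ξ →
        ω / (2 - ω) ≤ ‖lam - 2 / (2 - (ω : ℂ))‖ ∧
        ‖lam - 2 / (2 - (ω : ℂ))‖ ≤ ω / ((2 - ω) * (1 - ω)) := by
  have hSω : (IinvMat m - (ω / 2) • vecMulVec (eVec m) (eVec m)).map Complex.ofReal =
      (IinvMat m).map Complex.ofReal - (ω / 2 : ℂ) • vecMulVec 1 1 := by
    ext k l
    simp [vecMulVec_apply, eVec]
  have hC : (IinvMat m).map Complex.ofReal + ((IinvMat m).map Complex.ofReal)ᴴ = vecMulVec 1 1 := by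
    rw [← conjTranspose_map _ (fun x => by simp), conjTranspose_eq_transpose_of_trivial,
      ← Matrix.map_add _ Complex.ofReal_add, IinvMat_add_transpose, vecMulVec_eVec_map_ofReal]
  have hD : ((diagonal d).map Complex.ofReal).IsHermitian :=
    (isHermitian_diagonal d).map _ (fun x => by simp)
  dsimp only
  rw [hSω, hK]
  intro _ hP
  refine ⟨?_, fun lam ξ hξ h => mem_spectralAnnulus_of_eigen hC hD hω hQ hΓ hP hξ h⟩
  have hdvd := X_sub_one_pow_dvd_charpoly_allAtOnce _ _ _ _ hP
  rw [Fintype.card_fin, Fintype.card_fin] at hdvd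
  exact hdvd

open Polynomial Kronecker in
theorem stmt13 (m n : ℕ) (hm : 1 ≤ m) (hn : 1 ≤ n) (d : Fin m → ℝ) (hd : ∀ j, 0 < d j)
    (ω : ℝ) (hω : ω ∈ Set.Ioo (0 : ℝ) 1)
    (K Q : Matrix (Fin n) (Fin n) ℂ) (Γ : Fin n → ℂ) (hQ : IsUnit Q)
    (hΓ : ∀ j, (Γ j).re = 0) (hK : K = Q * Matrix.diagonal Γ * Q⁻¹) :
    let Dc : Matrix (Fin m) (Fin m) ℂ := (Matrix.diagonal d).map Complex.ofReal
    let Sω : Matrix (Fin m) (Fin m) ℂ :=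
      (IinvMat m - (ω / 2) • Matrix.vecMulVec (eVec m) (eVec m)).map Complex.ofReal
    let A : Matrix (Fin m × Fin n) (Fin m × Fin n) ℂ :=
      1 - ((IinvMat m).map Complex.ofReal * Dc) ⊗ₖ K
    let P : Matrix (Fin m × Fin n) (Fin m × Fin n) ℂ := 1 - (Sω * Dc) ⊗ₖ K
    IsUnit A → IsUnit P →
      ((X - 1) ^ (n * (m - 1)) ∣ (P⁻¹ * A).charpoly) ∧
      ∀ (lam : ℂ) (ξ : Fin m × Fin n → ℂ), ξ ≠ 0 →
        (P⁻¹ * A).mulVec ξ = lam • ξ →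
        ω / (2 - ω) ≤ ‖lam - 2 / (2 - (ω : ℂ))‖ ∧
        ‖lam - 2 / (2 - (ω : ℂ))‖ ≤ ω / ((2 - ω) * (1 - ω)) :=
  stmt13_general m n d ω hω K Q Γ hQ hΓ hK
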